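/- (C¹ regularity through one bounce.) Let f₀ : ℝ² × ℝ² → ℝ be continuously differentiable on (closed unit disk) × ℝ², satisfying the specular boundary condition f₀(x,v) = f₀(x, R_x v) for all |x| = 1 and all v ∈ ℝ², and the initial-boundary compatibility condition ∇_x f₀(x,v) = ∇_x f₀(x, R_x v) R_x − 2 ∇_v f₀(x, R_x v) A_{v,x} for all (x,v) ∈ γ₋. Define F(t,x,v) := f₀(x − t·v, v) if t ≤ t_b(x,v), and F(t,x,v) := f₀(x_b(x,v) − (t − t_b(x,v))·R_{x_b(x,v)} v, R_{x_b(x,v)} v) if t > t_b(x,v). Then F is continuously differentiable on the one-bounce region U := {(t,x,v) : t > 0, |x| ≤ 1, v ≠ 0, v·x ≠ 0 whenever |x| = 1, and t < t_b(x,v) + 2|v·x_b(x,v)|/|v|²}, and F satisfies the free transport equation ∂_t F + v·∇_x F = 0 on U. -/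

import Mathlib

noncomputable section

open Matrix Real Set

/-- The Euclidean plane ℝ². -/
abbrev E : Type := EuclideanSpace ℝ (Fin 2)

/-- Dot product on ℝ². -/
def dot (a b : E) : ℝ := a 0 * b 0 + a 1 * b 1

/-- Build a vector of ℝ² from its components. -/
def toE (f : Fin 2 → ℝ) : E := (WithLp.equiv 2 (Fin 2 → ℝ)).symm f

/-- Tensor (outer) product a⊗b, (a⊗b)_{ij} = aᵢ bⱼ. -/
def outer (a b : E) : Matrix (Fin 2) (Fin 2) ℝ := Matrix.of fun i j => a i * b j

/-- Matrix acting on a column vector. -/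
def mulV (M : Matrix (Fin 2) (Fin 2) ℝ) (v : E) : E := toE fun i => M i 0 * v 0 + M i 1 * v 1

/-- Row vector multiplied by a matrix on the right. -/
def vMulM (w : E) (M : Matrix (Fin 2) (Fin 2) ℝ) : E := toE fun j => w 0 * M 0 j + w 1 * M 1 j

/-- Specular reflection matrix R_n = I - 2 n⊗n. -/
def Rmat (n : E) : Matrix (Fin 2) (Fin 2) ℝ := 1 - (2 : ℝ) • outer n n

/-- The matrix A_{v,n} = ((v·n) I + n⊗v)(I - (v⊗n)/(v·n)). -/
def Amat (v n : E) : Matrix (Fin 2) (Fin 2) ℝ :=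
  (dot v n • (1 : Matrix (Fin 2) (Fin 2) ℝ) + outer n v) *
    (1 - (dot v n)⁻¹ • outer v n)

/-- Counterclockwise rotation by π/2. -/
def Qmat : Matrix (Fin 2) (Fin 2) ℝ := !![0, -1; 1, 0]

/-- Backward exit time from the closed unit disk. -/
def tb (x v : E) : ℝ := sSup {s : ℝ | 0 ≤ s ∧ ‖x - s • v‖ ≤ 1}

/-- Backward exit point from the closed unit disk. -/
def xb (x v : E) : E := x - tb x v • v

/-- The i-th column of a 2×2 matrix, as a vector of ℝ². -/
def colE (M : Matrix (Fin 2) (Fin 2) ℝ) (i : Fin 2) : E := toE fun k => M k i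

/-- A 2×2 matrix as a continuous linear map ℝ² → ℝ². -/
def toCLM (M : Matrix (Fin 2) (Fin 2) ℝ) : E →L[ℝ] E :=
  LinearMap.toContinuousLinearMap (Matrix.toEuclideanLin M)

/-- The phase space (closed unit disk) × ℝ². -/
def S : Set (E × E) := {p : E × E | ‖p.1‖ ≤ 1}

/-- The gradient in x of f₀ within (closed unit disk) × ℝ², as a row vector. -/
def gradx (f : E × E → ℝ) (x v : E) : E :=
  toE fun i => fderivWithin ℝ f S (x, v) (EuclideanSpace.single i 1, 0)

/-- The gradient in v of f₀ within (closed unit disk) × ℝ², as a row vector. -/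
def gradv (f : E × E → ℝ) (x v : E) : E :=
  toE fun i => fderivWithin ℝ f S (x, v) (0, EuclideanSpace.single i 1)

/-- The one-bounce mild solution F(t,x,v). -/
def Ffun (f₀ : E × E → ℝ) (p : ℝ × E × E) : ℝ :=
  if p.1 ≤ tb p.2.1 p.2.2 then f₀ (p.2.1 - p.1 • p.2.2, p.2.2)
  else
    f₀ (xb p.2.1 p.2.2 - (p.1 - tb p.2.1 p.2.2) • mulV (Rmat (xb p.2.1 p.2.2)) p.2.2,
        mulV (Rmat (xb p.2.1 p.2.2)) p.2.2)

/-- The one-bounce region U. -/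
def U : Set (ℝ × E × E) :=
  {p : ℝ × E × E |
    0 < p.1 ∧ ‖p.2.1‖ ≤ 1 ∧ p.2.2 ≠ 0 ∧ (‖p.2.1‖ = 1 → dot p.2.2 p.2.1 ≠ 0) ∧
    p.1 < tb p.2.1 p.2.2 + 2 * |dot p.2.2 (xb p.2.1 p.2.2)| / ‖p.2.2‖ ^ 2}

/-!
Before the backward exit time `T = exitTime x v` the mild solution is `f₀ ∘ freeFlow`, after it
`f₀ ∘ bounceFlow`, where `bounceFlow` continues the characteristic from the exit point `X` with
the reflected velocity `R_X v`. Both flows are smooth wherever the backward line meets the circle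
transversally, so `F` is `C¹` on either side of the interface `t = T`, and the two pieces glue to
a `C¹` function once their derivatives agree there. On the interface the exit point moves by the
oblique projection, along `v`, of the displacement onto the tangent line; this gives
`D bounceFlow = J ∘ D freeFlow` with `J (η, w) = (R_X η, R_X w - 2 A_{v,X} η)`
(`bounceJacobian`). The specular condition differentiated in `v` and the compatibility condition
differentiated in `x` say exactly that `Df₀ (X, v) = Df₀ (X, R_X v) ∘ J`. Both flows are constant
along the characteristic direction `(1, v, 0)`, which gives the transport equation.
-/

open scoped RealInnerProductSpace

section Gluing

lemma ContinuousOn.union_of_closure_inter_subset {X Z : Type*} [TopologicalSpace X]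
    [TopologicalSpace Z] {s t : Set X} {g : X → Z} (hs : closure s ∩ (s ∪ t) ⊆ s)
    (ht : closure t ∩ (s ∪ t) ⊆ t) (hgs : ContinuousOn g s) (hgt : ContinuousOn g t) :
    ContinuousOn g (s ∪ t) := by
  refine fun x hx => .union ?_ ?_
  · by_cases hxs : x ∈ s
    · exact hgs x hxs
    · exact continuousWithinAt_of_notMem_closure fun hcl => hxs (hs ⟨hcl, hx⟩)
  · by_cases hxt : x ∈ t
    · exact hgt x hxt
    · exact continuousWithinAt_of_notMem_closure fun hcl => hxt (ht ⟨hcl, hx⟩)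

lemma closure_inter_setOf_le_inter_subset {X : Type*} [TopologicalSpace X] {o u : Set X}
    (ho : IsOpen o) (hu : u ⊆ o) {φ ψ : X → ℝ} (hφ : ContinuousOn φ o)
    (hψ : ContinuousOn ψ o) :
    closure (u ∩ {x | φ x ≤ ψ x}) ∩ u ⊆ u ∩ {x | φ x ≤ ψ x} := by
  rintro x ⟨hcl, hxu⟩
  refine ⟨hxu, ?_⟩
  by_contra hlt
  have hopen : IsOpen (o ∩ (φ - ψ) ⁻¹' Set.Ioi 0) :=
    (hφ.sub hψ).isOpen_inter_preimage ho isOpen_Ioi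
  obtain ⟨y, ⟨-, hy⟩, -, hy'⟩ := mem_closure_iff.1 hcl _ hopen
    ⟨hu hxu, show 0 < φ x - ψ x from sub_pos.2 (not_le.1 hlt)⟩
  exact (sub_pos.1 (show 0 < φ y - ψ y from hy)).not_ge hy'

variable {X Y : Type*} [NormedAddCommGroup X] [NormedSpace ℝ X] [NormedAddCommGroup Y]
  [NormedSpace ℝ Y] {s t : Set X}

lemma HasFDerivWithinAt.union_of_closure_inter_subset {f : X → Y} {f' : X →L[ℝ] Y} {x : X}
    (hs : closure s ∩ (s ∪ t) ⊆ s) (ht : closure t ∩ (s ∪ t) ⊆ t) (hx : x ∈ s ∪ t)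
    (hfs : x ∈ s → HasFDerivWithinAt f f' s x) (hft : x ∈ t → HasFDerivWithinAt f f' t x) :
    HasFDerivWithinAt f f' (s ∪ t) x := by
  refine .union ?_ ?_
  · by_cases hxs : x ∈ s
    · exact hfs hxs
    · exact .of_notMem_closure fun hcl => hxs (hs ⟨hcl, hx⟩)
  · by_cases hxt : x ∈ t
    · exact hft hxt
    · exact .of_notMem_closure fun hcl => hxt (ht ⟨hcl, hx⟩)

lemma contDiffOn_one_of_hasFDerivWithinAt {f : X → Y} {f' : X → X →L[ℝ] Y}
    (hf : ∀ x ∈ s, HasFDerivWithinAt f (f' x) s x) (hf' : ContinuousOn f' s) :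
    ContDiffOn ℝ 1 f s := by
  rw [← zero_add (1 : WithTop ℕ∞), contDiffOn_succ_iff_hasFDerivWithinAt (by simp)]
  intro x hx
  exact ⟨s, by rw [insert_eq_of_mem hx]; exact self_mem_nhdsWithin, by simp, f', hf,
    contDiffOn_zero.2 hf'⟩

lemma HasFDerivAt.apply_eq_zero_of_forall_add_smul_eq {f : X → Y} {f' : X →L[ℝ] Y} {x : X}
    (hf : HasFDerivAt f f' x) (v : X) (hconst : ∀ s : ℝ, f (x + s • v) = f x) : f' v = 0 := by
  have h := hf.hasLineDerivAt v
  simp only [HasLineDerivAt, hconst] at h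
  exact h.unique (hasDerivAt_const _ _)

end Gluing

section ExitTime

variable {F : Type*} [NormedAddCommGroup F] [InnerProductSpace ℝ F] {x v : F}

/-- A quarter of the discriminant of `s ↦ ‖x - s • v‖ ^ 2 - 1`, whose roots are `entryTime x v`
and `exitTime x v`. -/
def exitDiscr (x v : F) : ℝ := ⟪x, v⟫ ^ 2 + ‖v‖ ^ 2 * (1 - ‖x‖ ^ 2)

def exitTime (x v : F) : ℝ := (⟪x, v⟫ + √(exitDiscr x v)) / ‖v‖ ^ 2

def entryTime (x v : F) : ℝ := (⟪x, v⟫ - √(exitDiscr x v)) / ‖v‖ ^ 2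

def exitPoint (x v : F) : F := x - exitTime x v • v

lemma norm_sub_smul_sq (x v : F) (s : ℝ) :
    ‖x - s • v‖ ^ 2 = ‖x‖ ^ 2 - 2 * s * ⟪x, v⟫ + s ^ 2 * ‖v‖ ^ 2 := by
  rw [@norm_sub_sq_real, inner_smul_right, norm_smul, mul_pow, Real.norm_eq_abs, sq_abs]
  ring

lemma sq_inner_le_exitDiscr (hx : ‖x‖ ≤ 1) : ⟪x, v⟫ ^ 2 ≤ exitDiscr x v := by
  have : ‖x‖ ^ 2 ≤ 1 := pow_le_one₀ (norm_nonneg x) hx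
  unfold exitDiscr
  nlinarith [sq_nonneg ‖v‖]

lemma exitDiscr_nonneg (hx : ‖x‖ ≤ 1) : 0 ≤ exitDiscr x v :=
  (sq_nonneg _).trans (sq_inner_le_exitDiscr hx)

lemma abs_inner_le_sqrt_exitDiscr (hx : ‖x‖ ≤ 1) : |⟪x, v⟫| ≤ √(exitDiscr x v) :=
  Real.abs_le_sqrt (sq_inner_le_exitDiscr hx)

lemma norm_sub_smul_sq_sub_one (hv : v ≠ 0) (hD : 0 ≤ exitDiscr x v) (s : ℝ) :
    ‖x - s • v‖ ^ 2 - 1 = ‖v‖ ^ 2 * (s - entryTime x v) * (s - exitTime x v) := by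
  have hv2 : ‖v‖ ^ 2 ≠ 0 := by positivity
  rw [norm_sub_smul_sq, entryTime, exitTime]
  field_simp
  linear_combination Real.sq_sqrt hD + exitDiscr.eq_1 x v

lemma norm_sub_smul_le_one_iff (hv : v ≠ 0) (hD : 0 ≤ exitDiscr x v) (s : ℝ) :
    ‖x - s • v‖ ≤ 1 ↔ entryTime x v ≤ s ∧ s ≤ exitTime x v := by
  have hroots : entryTime x v ≤ exitTime x v := by
    unfold entryTime exitTime
    gcongr
    linarith [Real.sqrt_nonneg (exitDiscr x v)]
  have hv2 : 0 < ‖v‖ ^ 2 := by positivity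
  rw [← sq_le_one_iff₀ (norm_nonneg _), ← sub_nonpos, norm_sub_smul_sq_sub_one hv hD]
  constructor
  · intro h
    by_contra hs
    rcases not_and_or.mp hs with hs | hs <;> rw [not_le] at hs
    · nlinarith [mul_pos (mul_pos hv2 (sub_pos.2 hs)) (sub_pos.2 (hs.trans_le hroots))]
    · nlinarith [mul_pos (mul_pos hv2 (sub_pos.2 (hroots.trans_lt hs))) (sub_pos.2 hs)]
  · rintro ⟨h₁, h₂⟩
    exact mul_nonpos_of_nonneg_of_nonpos (by positivity) (by linarith)

lemma entryTime_nonpos (hx : ‖x‖ ≤ 1) : entryTime x v ≤ 0 :=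
  div_nonpos_of_nonpos_of_nonneg
    (by linarith [(le_abs_self _).trans (abs_inner_le_sqrt_exitDiscr (v := v) hx)])
    (by positivity)

lemma exitTime_nonneg (hx : ‖x‖ ≤ 1) : 0 ≤ exitTime x v :=
  div_nonneg (by linarith [(neg_le_abs _).trans (abs_inner_le_sqrt_exitDiscr (v := v) hx)])
    (by positivity)

lemma csSup_setOf_norm_sub_smul_le_one (hx : ‖x‖ ≤ 1) (hv : v ≠ 0) :
    sSup {s : ℝ | 0 ≤ s ∧ ‖x - s • v‖ ≤ 1} = exitTime x v := by
  have hD := exitDiscr_nonneg (v := v) hx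
  refine IsGreatest.csSup_eq ⟨⟨exitTime_nonneg hx, ?_⟩, fun s hs => ?_⟩
  · exact (norm_sub_smul_le_one_iff hv hD _).2
      ⟨(entryTime_nonpos hx).trans (exitTime_nonneg hx), le_rfl⟩
  · exact ((norm_sub_smul_le_one_iff hv hD s).1 hs.2).2

lemma norm_exitPoint (hv : v ≠ 0) (hD : 0 ≤ exitDiscr x v) : ‖exitPoint x v‖ = 1 := by
  have h := norm_sub_smul_sq_sub_one hv hD (exitTime x v)
  rw [sub_self, mul_zero, sub_eq_zero] at h
  rw [exitPoint]
  exact (pow_eq_one_iff_of_nonneg (norm_nonneg _) two_ne_zero).1 h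

lemma inner_exitPoint (hv : v ≠ 0) : ⟪v, exitPoint x v⟫ = -√(exitDiscr x v) := by
  have hv2 : ‖v‖ ^ 2 ≠ 0 := by positivity
  rw [exitPoint, inner_sub_right, inner_smul_right, real_inner_self_eq_norm_sq, exitTime,
    real_inner_comm]
  field_simp
  ring

lemma exitDiscr_add_smul (x v : F) (s : ℝ) : exitDiscr (x + s • v) v = exitDiscr x v := by
  simp only [exitDiscr, inner_add_left, inner_smul_left, real_inner_self_eq_norm_sq,
    @norm_add_sq_real, inner_smul_right, norm_smul, mul_pow, Real.norm_eq_abs, sq_abs,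
    RCLike.conj_to_real]
  ring

lemma exitTime_add_smul (hv : v ≠ 0) (s : ℝ) : exitTime (x + s • v) v = exitTime x v + s := by
  have hv2 : ‖v‖ ^ 2 ≠ 0 := by positivity
  rw [exitTime, exitTime, exitDiscr_add_smul, inner_add_left, inner_smul_left,
    real_inner_self_eq_norm_sq, RCLike.conj_to_real]
  field_simp
  ring

lemma exitPoint_add_smul (hv : v ≠ 0) (s : ℝ) : exitPoint (x + s • v) v = exitPoint x v := by
  rw [exitPoint, exitPoint, exitTime_add_smul hv]
  module

end ExitTime

section Bounce

variable {F : Type*} [NormedAddCommGroup F] [InnerProductSpace ℝ F]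

def reflect (n : F) : F →L[ℝ] F :=
  ContinuousLinearMap.id ℝ F - (2 : ℝ) • (innerSL ℝ n).smulRight n

lemma reflect_apply (n u : F) : reflect n u = u - (2 * ⟪n, u⟫) • n := by
  simp [reflect, mul_smul]

lemma inner_reflect_self {n : F} (hn : ‖n‖ = 1) (u : F) :
    ⟪n, reflect n u⟫ = -⟪n, u⟫ := by
  rw [reflect_apply, inner_sub_right, inner_smul_right, real_inner_self_eq_norm_sq, hn]
  ring

lemma norm_reflect {n : F} (hn : ‖n‖ = 1) (u : F) : ‖reflect n u‖ = ‖u‖ := by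
  rw [← sq_eq_sq₀ (norm_nonneg _) (norm_nonneg _), reflect_apply, @norm_sub_sq_real,
    inner_smul_right, norm_smul, hn, real_inner_comm]
  simp only [Real.norm_eq_abs, mul_pow, sq_abs]
  ring

def obliqueProj (v n η : F) : F := η - (⟪n, η⟫ / ⟪v, n⟫) • v

/-- `A_{v,n} η` for `A_{v,n} = (⟪v, n⟫ I + n ⊗ v) (I - v ⊗ n / ⟪v, n⟫)`; the second factor is
`obliqueProj v n`. -/
def amatApply (v n η : F) : F :=
  ⟪v, n⟫ • obliqueProj v n η + ⟪v, obliqueProj v n η⟫ • n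

def bounceJacobian (n v : F) (p : F × F) : F × F :=
  (reflect n p.1, reflect n p.2 - (2 : ℝ) • amatApply v n p.1)

lemma bounceJacobian_sub_smul_of_inner_eq_zero {n v X' w : F} {τ : ℝ} (hs : ⟪n, v⟫ ≠ 0)
    (horth : ⟪n, X'⟫ = 0) :
    bounceJacobian n v (X' - τ • v, w) =
      (X' - τ • (v - (2 * ⟪n, v⟫) • n),
        w - ((2 * ⟪n, v⟫) • X' + (2 * (⟪n, w⟫ + ⟪X', v⟫)) • n)) := by
  have hproj : obliqueProj v n (X' - τ • v) = X' := by
    rw [obliqueProj, inner_sub_right, horth, inner_smul_right, real_inner_comm n v, zero_sub,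
      neg_div, mul_div_cancel_right₀ _ hs]
    module
  simp only [bounceJacobian, amatApply, hproj, reflect_apply, inner_sub_right, horth,
    inner_smul_right, real_inner_comm X' v, real_inner_comm n v]
  ext <;> simp only <;> module

def freeFlow (q : ℝ × F × F) : F × F := (q.2.1 - q.1 • q.2.2, q.2.2)

def bounceFlow (q : ℝ × F × F) : F × F :=
  (exitPoint q.2.1 q.2.2 - (q.1 - exitTime q.2.1 q.2.2) • reflect (exitPoint q.2.1 q.2.2) q.2.2,
    reflect (exitPoint q.2.1 q.2.2) q.2.2)

def transversalSet : Set (ℝ × F × F) := {q | q.2.2 ≠ 0 ∧ 0 < exitDiscr q.2.1 q.2.2}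

lemma norm_freeFlow_fst_le {q : ℝ × F × F} (hx : ‖q.2.1‖ ≤ 1) (hv : q.2.2 ≠ 0)
    (ht₀ : 0 ≤ q.1) (ht : q.1 ≤ exitTime q.2.1 q.2.2) : ‖(freeFlow q).1‖ ≤ 1 :=
  (norm_sub_smul_le_one_iff hv (exitDiscr_nonneg hx) q.1).2
    ⟨(entryTime_nonpos hx).trans ht₀, ht⟩

lemma norm_bounceFlow_fst_le {q : ℝ × F × F} (hv : q.2.2 ≠ 0)
    (hD : 0 ≤ exitDiscr q.2.1 q.2.2) (ht : exitTime q.2.1 q.2.2 ≤ q.1)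
    (ht' : q.1 ≤ exitTime q.2.1 q.2.2 + 2 * √(exitDiscr q.2.1 q.2.2) / ‖q.2.2‖ ^ 2) :
    ‖(bounceFlow q).1‖ ≤ 1 := by
  obtain ⟨t, x, v⟩ := q
  have hX := norm_exitPoint hv hD
  have hv2 : 0 < ‖v‖ ^ 2 := by positivity
  set τ := t - exitTime x v
  have hτ : τ * ‖v‖ ^ 2 ≤ 2 * √(exitDiscr x v) := by
    rw [← le_div_iff₀ hv2]; simp only [τ] at ht' ⊢; linarith
  have key :
      ‖(bounceFlow (t, x, v)).1‖ ^ 2 = 1 - τ * (2 * √(exitDiscr x v) - τ * ‖v‖ ^ 2) := by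
    simp only [bounceFlow]
    rw [@norm_sub_sq_real, norm_smul, norm_reflect hX, inner_smul_right, inner_reflect_self hX,
      real_inner_comm, inner_exitPoint hv, hX, Real.norm_eq_abs, mul_pow, sq_abs]
    ring
  rw [← sq_le_one_iff₀ (norm_nonneg _), key]
  nlinarith [sub_nonneg.2 ht]

lemma bounceFlow_of_eq_exitTime {q : ℝ × F × F} (ht : q.1 = exitTime q.2.1 q.2.2) :
    bounceFlow q = (exitPoint q.2.1 q.2.2, reflect (exitPoint q.2.1 q.2.2) q.2.2) := by
  simp [bounceFlow, ht]

lemma freeFlow_add_smul (q : ℝ × F × F) (s : ℝ) :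
    freeFlow (q + s • (1, q.2.2, 0)) = freeFlow q := by
  simp only [freeFlow, Prod.fst_add, Prod.snd_add, Prod.smul_mk, smul_zero, add_zero, smul_eq_mul,
    mul_one, add_smul]
  congr 1
  module

lemma bounceFlow_add_smul {q : ℝ × F × F} (hv : q.2.2 ≠ 0) (s : ℝ) :
    bounceFlow (q + s • (1, q.2.2, 0)) = bounceFlow q := by
  obtain ⟨t, x, v⟩ := q
  simp only [bounceFlow, Prod.mk_add_mk, Prod.smul_mk, smul_zero, add_zero, smul_eq_mul, mul_one,
    exitPoint_add_smul hv, exitTime_add_smul hv]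
  congr 3
  ring

end Bounce

section Smoothness

variable {F : Type*} [NormedAddCommGroup F] [InnerProductSpace ℝ F] {n : WithTop ℕ∞}

lemma contDiff_exitDiscr : ContDiff ℝ n fun q : ℝ × F × F => exitDiscr q.2.1 q.2.2 := by
  have hx : ContDiff ℝ n fun q : ℝ × F × F => q.2.1 := contDiff_snd.fst
  have hv : ContDiff ℝ n fun q : ℝ × F × F => q.2.2 := contDiff_snd.snd
  unfold exitDiscr
  exact ((hx.inner ℝ hv).pow 2).add
    (((contDiff_norm_sq ℝ).comp hv).mul (contDiff_const.sub ((contDiff_norm_sq ℝ).comp hx)))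

lemma isOpen_transversalSet : IsOpen (transversalSet : Set (ℝ × F × F)) :=
  (isOpen_compl_singleton.preimage continuous_snd.snd).inter
    (isOpen_lt continuous_const (contDiff_exitDiscr (n := 0)).continuous)

lemma contDiffAt_exitTime {q : ℝ × F × F} (hq : q ∈ transversalSet) :
    ContDiffAt ℝ n (fun q : ℝ × F × F => exitTime q.2.1 q.2.2) q := by
  unfold exitTime
  exact ((contDiffAt_snd.fst.inner ℝ contDiffAt_snd.snd).add
    (contDiff_exitDiscr.contDiffAt.sqrt hq.2.ne')).div
    (contDiff_norm_sq ℝ |>.comp (by fun_prop)).contDiffAt (by simpa using hq.1)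

lemma contDiffAt_exitPoint {q : ℝ × F × F} (hq : q ∈ transversalSet) :
    ContDiffAt ℝ n (fun q : ℝ × F × F => exitPoint q.2.1 q.2.2) q := by
  have := contDiffAt_exitTime (n := n) hq
  unfold exitPoint
  fun_prop

lemma contDiffOn_bounceFlow : ContDiffOn ℝ n (bounceFlow (F := F)) transversalSet := by
  intro q hq
  have hT := contDiffAt_exitTime (n := n) hq
  have hX := contDiffAt_exitPoint (n := n) hq
  have hW :
      ContDiffAt ℝ n (fun q : ℝ × F × F => reflect (exitPoint q.2.1 q.2.2) q.2.2) q := by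
    have : ContDiffAt ℝ n (fun q : ℝ × F × F => ⟪exitPoint q.2.1 q.2.2, q.2.2⟫) q :=
      hX.inner ℝ contDiffAt_snd.snd
    simp only [reflect_apply]; fun_prop
  unfold bounceFlow
  exact (contDiffAt_fst.sub hT |>.smul hW |> hX.sub).prodMk hW |>.contDiffWithinAt

lemma contDiff_freeFlow : ContDiff ℝ n (freeFlow (F := F)) := by
  unfold freeFlow; fun_prop

end Smoothness

section Derivatives

variable {F : Type*} [NormedAddCommGroup F] [InnerProductSpace ℝ F]

lemma fderiv_freeFlow_apply (q δ : ℝ × F × F) :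
    fderiv ℝ freeFlow q δ = (δ.2.1 - (q.1 • δ.2.2 + δ.1 • q.2.2), δ.2.2) := by
  have hv := (hasFDerivAt_id (𝕜 := ℝ) q).snd.snd
  have h : HasFDerivAt (freeFlow (F := F)) _ q :=
    ((hasFDerivAt_id (𝕜 := ℝ) q).snd.fst.sub ((hasFDerivAt_id (𝕜 := ℝ) q).fst.smul hv)).prodMk hv
  rw [h.fderiv]
  simp

lemma HasFDerivAt.inner_apply_eq_zero_of_eventually_norm_eq {G : Type*} [NormedAddCommGroup G]
    [NormedSpace ℝ G] {g : G → F} {g' : G →L[ℝ] F} {y : G} (hg : HasFDerivAt g g' y)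
    (hconst : ∀ᶠ z in nhds y, ‖g z‖ = ‖g y‖) (δ : G) : ⟪g y, g' δ⟫ = 0 := by
  have h₀ : HasFDerivAt (‖g ·‖ ^ 2) (0 : G →L[ℝ] ℝ) y :=
    (hasFDerivAt_const (‖g y‖ ^ 2) y).congr_of_eventuallyEq
      (hconst.mono fun z hz => by simp [hz])
  have := congrArg (· δ) (hg.norm_sq.unique h₀)
  simpa using this

lemma fderiv_exitPoint_apply {q : ℝ × F × F} (hq : q ∈ transversalSet) (δ : ℝ × F × F) :
    fderiv ℝ (fun q : ℝ × F × F => exitPoint q.2.1 q.2.2) q δ =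
      δ.2.1 - (exitTime q.2.1 q.2.2 • δ.2.2 +
        fderiv ℝ (fun q : ℝ × F × F => exitTime q.2.1 q.2.2) q δ • q.2.2) := by
  have hT := ((contDiffAt_exitTime (n := 1) hq).differentiableAt one_ne_zero).hasFDerivAt
  have hX : HasFDerivAt (fun q : ℝ × F × F => exitPoint q.2.1 q.2.2) _ q :=
    (hasFDerivAt_id (𝕜 := ℝ) q).snd.fst.sub (hT.smul (hasFDerivAt_id (𝕜 := ℝ) q).snd.snd)
  rw [hX.fderiv]
  simp

/-- The exit point stays on the unit sphere, so it moves tangentially. -/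
lemma inner_exitPoint_fderiv_exitPoint {q : ℝ × F × F} (hq : q ∈ transversalSet)
    (δ : ℝ × F × F) :
    ⟪exitPoint q.2.1 q.2.2,
      fderiv ℝ (fun q : ℝ × F × F => exitPoint q.2.1 q.2.2) q δ⟫ = 0 := by
  refine ((contDiffAt_exitPoint (n := 1) hq).differentiableAt one_ne_zero).hasFDerivAt
    |>.inner_apply_eq_zero_of_eventually_norm_eq ?_ δ
  filter_upwards [isOpen_transversalSet.mem_nhds hq] with z hz
  rw [norm_exitPoint hz.1 hz.2.le, norm_exitPoint hq.1 hq.2.le]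

lemma fderiv_bounceFlow_apply_of_eq_exitTime {q : ℝ × F × F} (hq : q ∈ transversalSet)
    (ht : q.1 = exitTime q.2.1 q.2.2) (δ : ℝ × F × F) :
    fderiv ℝ bounceFlow q δ =
      bounceJacobian (exitPoint q.2.1 q.2.2) q.2.2 (fderiv ℝ freeFlow q δ) := by
  have hT := ((contDiffAt_exitTime (n := 1) hq).differentiableAt one_ne_zero).hasFDerivAt
  have hX := ((contDiffAt_exitPoint (n := 1) hq).differentiableAt one_ne_zero).hasFDerivAt
  have hv := (hasFDerivAt_id (𝕜 := ℝ) q).snd.snd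
  have hW := hv.sub (((hX.inner ℝ hv).const_mul 2).smul hX)
  have hP := hX.sub (((hasFDerivAt_id (𝕜 := ℝ) q).fst.sub hT).smul hW)
  have hB : HasFDerivAt (𝕜 := ℝ) bounceFlow _ q :=
    (hP.prodMk hW).congr_of_eventuallyEq (Filter.Eventually.of_forall fun q => by
      simp [bounceFlow, reflect_apply])
  have hs : ⟪exitPoint q.2.1 q.2.2, q.2.2⟫ ≠ 0 := by
    rw [real_inner_comm, inner_exitPoint hq.1, neg_ne_zero]
    exact (Real.sqrt_pos.2 hq.2).ne'
  have hη : δ.2.1 - (q.1 • δ.2.2 + δ.1 • q.2.2) =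
      fderiv ℝ (fun q : ℝ × F × F => exitPoint q.2.1 q.2.2) q δ -
        (δ.1 - fderiv ℝ (fun q : ℝ × F × F => exitTime q.2.1 q.2.2) q δ) • q.2.2 := by
    rw [fderiv_exitPoint_apply hq δ, ht]
    module
  rw [hB.fderiv, fderiv_freeFlow_apply, hη,
    bounceJacobian_sub_smul_of_inner_eq_zero hs (inner_exitPoint_fderiv_exitPoint hq δ)]
  simp [ht]

end Derivatives

section OneBounceRegion

variable {F : Type*} [NormedAddCommGroup F] [InnerProductSpace ℝ F]

def oneBounceOpen : Set (ℝ × F × F) :=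
  {q | q ∈ transversalSet ∧ 0 < q.1 ∧
    q.1 < exitTime q.2.1 q.2.2 + 2 * √(exitDiscr q.2.1 q.2.2) / ‖q.2.2‖ ^ 2}

lemma continuousOn_exitTime :
    ContinuousOn (fun q : ℝ × F × F => exitTime q.2.1 q.2.2) transversalSet :=
  fun _ hq => (contDiffAt_exitTime (n := 0) hq).continuousAt.continuousWithinAt

lemma isOpen_oneBounceOpen : IsOpen (oneBounceOpen : Set (ℝ × F × F)) := by
  have hD : Continuous fun q : ℝ × F × F => √(exitDiscr q.2.1 q.2.2) :=
    (contDiff_exitDiscr (n := 0)).continuous.sqrt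
  have hbound : ContinuousOn
      (fun q : ℝ × F × F => exitTime q.2.1 q.2.2 + 2 * √(exitDiscr q.2.1 q.2.2) / ‖q.2.2‖ ^ 2 - q.1)
      transversalSet :=
    (continuousOn_exitTime.add ((continuous_const.mul hD).continuousOn.div
      (continuous_snd.snd.norm.pow 2).continuousOn fun q hq => by simpa using hq.1)).sub
      continuous_fst.continuousOn
  have h := (hbound.isOpen_inter_preimage isOpen_transversalSet (isOpen_Ioi (a := 0))).inter
    (isOpen_lt (continuous_const (y := (0 : ℝ))) (continuous_fst (X := ℝ) (Y := F × F)))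
  convert h using 1
  ext q
  simp only [oneBounceOpen, Set.mem_ofPred_eq, Set.mem_inter_iff, Set.mem_preimage, Set.mem_Ioi,
    sub_pos]
  tauto

lemma exitDiscr_pos_iff {x v : F} (hx : ‖x‖ ≤ 1) (hv : v ≠ 0) :
    0 < exitDiscr x v ↔ (‖x‖ = 1 → ⟪v, x⟫ ≠ 0) := by
  rcases hx.lt_or_eq with hx | hx
  · have : 0 < 1 - ‖x‖ ^ 2 := by nlinarith [norm_nonneg x]
    simp only [hx.ne, false_imp_iff, iff_true, exitDiscr]
    positivity
  · simp [exitDiscr, hx, real_inner_comm, sq_pos_iff]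

end OneBounceRegion

section Plane

lemma dot_eq_inner (a b : E) : dot a b = ⟪a, b⟫ := by
  simp [dot, PiLp.inner_apply, Fin.sum_univ_two, mul_comm]

lemma mulV_Rmat (n u : E) : mulV (Rmat n) u = reflect n u := by
  ext i
  fin_cases i <;>
  simp [mulV, Rmat, outer, toE, reflect_apply, PiLp.inner_apply, Fin.sum_univ_two,
    Matrix.one_apply] <;> ring

lemma mulV_Amat (v n η : E) : mulV (Amat v n) η = amatApply v n η := by
  ext i
  fin_cases i <;>
  simp [mulV, Amat, outer, toE, amatApply, obliqueProj, dot_eq_inner, PiLp.inner_apply,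
    Fin.sum_univ_two, Matrix.mul_apply, Matrix.one_apply] <;> ring

lemma inner_vMulM (w η : E) (M : Matrix (Fin 2) (Fin 2) ℝ) :
    ⟪vMulM w M, η⟫ = ⟪w, mulV M η⟫ := by
  simp only [← dot_eq_inner, vMulM, mulV, dot, toE, WithLp.equiv_symm_apply]
  ring

lemma inner_gradx (f : E × E → ℝ) (x v η : E) :
    ⟪gradx f x v, η⟫ = fderivWithin ℝ f S (x, v) (η, 0) := by
  have hη : ((η, 0) : E × E) =
      η 0 • (EuclideanSpace.single 0 1, 0) + η 1 • (EuclideanSpace.single 1 1, 0) := by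
    ext i <;> fin_cases i <;> simp
  rw [hη, map_add, map_smul, map_smul, ← dot_eq_inner]
  simp [gradx, dot, toE, mul_comm]

lemma inner_gradv (f : E × E → ℝ) (x v η : E) :
    ⟪gradv f x v, η⟫ = fderivWithin ℝ f S (x, v) (0, η) := by
  have hη : ((0, η) : E × E) =
      η 0 • (0, EuclideanSpace.single 0 1) + η 1 • (0, EuclideanSpace.single 1 1) := by
    ext i <;> fin_cases i <;> simp
  rw [hη, map_add, map_smul, map_smul, ← dot_eq_inner]
  simp [gradv, dot, toE, mul_comm]

lemma tb_eq_exitTime {x v : E} (hx : ‖x‖ ≤ 1) (hv : v ≠ 0) : tb x v = exitTime x v :=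
  csSup_setOf_norm_sub_smul_le_one hx hv

lemma xb_eq_exitPoint {x v : E} (hx : ‖x‖ ≤ 1) (hv : v ≠ 0) : xb x v = exitPoint x v := by
  rw [xb, exitPoint, tb_eq_exitTime hx hv]

end Plane

section BoundaryConditions

variable {f₀ : E × E → ℝ} {b : E}

def SpecularBoundary (f₀ : E × E → ℝ) : Prop :=
  ∀ x v : E, ‖x‖ = 1 → f₀ (x, v) = f₀ (x, mulV (Rmat x) v)

def InitialBoundaryCompatible (f₀ : E × E → ℝ) : Prop :=
  ∀ x v : E, ‖x‖ = 1 → dot v x < 0 →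
    gradx f₀ x v =
      vMulM (gradx f₀ x (mulV (Rmat x) v)) (Rmat x) -
        (2 : ℝ) • vMulM (gradv f₀ x (mulV (Rmat x) v)) (Amat v x)

lemma fderivWithin_inr_eq_reflect (hf : DifferentiableOn ℝ f₀ S) (hbc : SpecularBoundary f₀)
    (hb : ‖b‖ = 1) (u w : E) :
    fderivWithin ℝ f₀ S (b, u) (0, w) =
      fderivWithin ℝ f₀ S (b, reflect b u) (0, reflect b w) := by
  have hbS : ∀ u : E, ((b, u) : E × E) ∈ S := fun _ => hb.le
  have hslice (u : E) : HasFDerivAt (f₀ ∘ fun u => (b, u))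
      ((fderivWithin ℝ f₀ S (b, u)).comp (ContinuousLinearMap.inr ℝ E E)) u :=
    (hf _ (hbS u)).hasFDerivWithinAt.comp_hasFDerivAt u (hasFDerivAt_prodMk_right b u)
      (Filter.Eventually.of_forall hbS)
  have hinv : (f₀ ∘ fun u => (b, u)) = (f₀ ∘ fun u => (b, u)) ∘ reflect b :=
    funext fun u => by simp [hbc b u hb, mulV_Rmat]
  have h := hslice u
  rw [hinv] at h
  have h' := congrArg (· w) (h.unique ((hslice (reflect b u)).comp u (reflect b).hasFDerivAt))
  simpa using h'

lemma fderivWithin_inl_eq_of_compatible (hcomp : InitialBoundaryCompatible f₀)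
    (hb : ‖b‖ = 1) {v : E} (hv : ⟪v, b⟫ < 0) (η : E) :
    fderivWithin ℝ f₀ S (b, v) (η, 0) =
      fderivWithin ℝ f₀ S (b, reflect b v) (reflect b η, 0) -
        2 * fderivWithin ℝ f₀ S (b, reflect b v) (0, amatApply v b η) := by
  have h := congrArg (⟪·, η⟫) (hcomp b v hb (by rwa [dot_eq_inner]))
  simpa only [inner_sub_left, inner_smul_left, inner_vMulM, inner_gradx, inner_gradv, mulV_Rmat,
    mulV_Amat, RCLike.conj_to_real] using h

lemma fderivWithin_eq_bounceJacobian (hf : DifferentiableOn ℝ f₀ S)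
    (hbc : SpecularBoundary f₀) (hcomp : InitialBoundaryCompatible f₀)
    (hb : ‖b‖ = 1) {v : E} (hv : ⟪v, b⟫ < 0) (p : E × E) :
    fderivWithin ℝ f₀ S (b, v) p =
      fderivWithin ℝ f₀ S (b, reflect b v) (bounceJacobian b v p) := by
  obtain ⟨η, w⟩ := p
  have hL : ((η, w) : E × E) = (η, 0) + (0, w) := by simp
  have hR : bounceJacobian b v (η, w) =
      (reflect b η, 0) + (0, reflect b w) - (2 : ℝ) • (0, amatApply v b η) := by
    simp [bounceJacobian]
  rw [hR, hL, map_add, map_sub, map_add, map_smul, fderivWithin_inl_eq_of_compatible hcomp hb hv,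
    fderivWithin_inr_eq_reflect hf hbc hb v w, smul_eq_mul]
  ring

end BoundaryConditions

section MildSolution

lemma U_eq : U = {q | ‖q.2.1‖ ≤ 1} ∩ oneBounceOpen := by
  ext ⟨t, x, v⟩
  simp only [U, oneBounceOpen, transversalSet, Set.mem_ofPred_eq, Set.mem_inter_iff]
  constructor
  · rintro ⟨ht, hx, hv, hD, hlt⟩
    rw [dot_eq_inner, ← exitDiscr_pos_iff hx hv] at hD
    rw [tb_eq_exitTime hx hv, xb_eq_exitPoint hx hv, dot_eq_inner, inner_exitPoint hv, abs_neg,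
      abs_of_nonneg (Real.sqrt_nonneg _)] at hlt
    exact ⟨hx, ⟨hv, hD⟩, ht, hlt⟩
  · rintro ⟨hx, ⟨hv, hD⟩, ht, hlt⟩
    rw [dot_eq_inner, ← exitDiscr_pos_iff hx hv]
    rw [tb_eq_exitTime hx hv, xb_eq_exitPoint hx hv, dot_eq_inner, inner_exitPoint hv, abs_neg,
      abs_of_nonneg (Real.sqrt_nonneg _)]
    exact ⟨ht, hx, hv, hD, hlt⟩

lemma U_subset_transversalSet : U ⊆ transversalSet := by
  rw [U_eq]
  exact fun q hq => hq.2.1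

lemma uniqueDiffOn_S : UniqueDiffOn ℝ S := by
  have : S = Metric.closedBall (0 : E) 1 ×ˢ Set.univ := by
    ext; simp [S]
  rw [this]
  exact (uniqueDiffOn_convex (convex_closedBall 0 1) ⟨0, by simp [interior_closedBall]⟩).prod
    uniqueDiffOn_univ

lemma uniqueDiffOn_U : UniqueDiffOn ℝ U := by
  have : {q : ℝ × E × E | ‖q.2.1‖ ≤ 1} = Set.univ ×ˢ S := by
    ext; simp [S]
  rw [U_eq, this]
  exact (uniqueDiffOn_univ.prod uniqueDiffOn_S).inter isOpen_oneBounceOpen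

def preBounceSet : Set (ℝ × E × E) := U ∩ {q | q.1 ≤ exitTime q.2.1 q.2.2}

def postBounceSet : Set (ℝ × E × E) := U ∩ {q | exitTime q.2.1 q.2.2 ≤ q.1}

lemma preBounceSet_union_postBounceSet : preBounceSet ∪ postBounceSet = U := by
  rw [preBounceSet, postBounceSet, ← Set.inter_union_distrib_left]
  ext q
  simp [le_total]

lemma postBounceSet_subset_transversalSet : postBounceSet ⊆ transversalSet :=
  Set.inter_subset_left.trans U_subset_transversalSet

lemma closure_preBounceSet_inter_subset :
    closure preBounceSet ∩ (preBounceSet ∪ postBounceSet) ⊆ preBounceSet := by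
  rw [preBounceSet_union_postBounceSet]
  exact closure_inter_setOf_le_inter_subset isOpen_transversalSet U_subset_transversalSet
    continuous_fst.continuousOn continuousOn_exitTime

lemma closure_postBounceSet_inter_subset :
    closure postBounceSet ∩ (preBounceSet ∪ postBounceSet) ⊆ postBounceSet := by
  rw [preBounceSet_union_postBounceSet]
  exact closure_inter_setOf_le_inter_subset isOpen_transversalSet U_subset_transversalSet
    continuousOn_exitTime continuous_fst.continuousOn

lemma mapsTo_freeFlow : Set.MapsTo freeFlow preBounceSet S := by
  rintro q ⟨hq, h⟩
  rw [U_eq] at hq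
  exact norm_freeFlow_fst_le hq.1 hq.2.1.1 hq.2.2.1.le h

lemma mapsTo_bounceFlow : Set.MapsTo bounceFlow postBounceSet S := by
  rintro q ⟨hq, h⟩
  rw [U_eq] at hq
  exact norm_bounceFlow_fst_le hq.2.1.1 hq.2.1.2.le h hq.2.2.2.le

variable {f₀ : E × E → ℝ} {q : ℝ × E × E}

lemma eqOn_Ffun_freeFlow : Set.EqOn (Ffun f₀) (f₀ ∘ freeFlow) preBounceSet := by
  rintro q ⟨hq, h⟩
  rw [U_eq] at hq
  rw [Ffun, if_pos (by rwa [tb_eq_exitTime hq.1 hq.2.1.1]), Function.comp_apply, freeFlow]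

lemma eqOn_Ffun_bounceFlow (hbc : SpecularBoundary f₀) :
    Set.EqOn (Ffun f₀) (f₀ ∘ bounceFlow) postBounceSet := by
  rintro q ⟨hq, h⟩
  rw [U_eq] at hq
  obtain ⟨hx, ⟨hv, hD⟩, -⟩ := hq
  rw [Function.comp_apply]
  rcases (show exitTime q.2.1 q.2.2 ≤ q.1 from h).lt_or_eq with h | h
  · rw [Ffun, if_neg (by rw [tb_eq_exitTime hx hv]; exact h.not_ge), xb_eq_exitPoint hx hv,
      tb_eq_exitTime hx hv, mulV_Rmat, bounceFlow]
  · rw [Ffun, if_pos (by rw [tb_eq_exitTime hx hv]; exact h.ge), bounceFlow_of_eq_exitTime h.symm,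
      ← mulV_Rmat, ← hbc _ _ (norm_exitPoint hv hD.le), exitPoint, h]

def chainDeriv (f₀ : E × E → ℝ) (g : ℝ × E × E → E × E) (q : ℝ × E × E) :
    ℝ × E × E →L[ℝ] ℝ :=
  (fderivWithin ℝ f₀ S (g q)).comp (fderiv ℝ g q)

def FfunDeriv (f₀ : E × E → ℝ) (q : ℝ × E × E) : ℝ × E × E →L[ℝ] ℝ :=
  if q.1 ≤ exitTime q.2.1 q.2.2 then chainDeriv f₀ freeFlow q else chainDeriv f₀ bounceFlow q

lemma chainDeriv_freeFlow_eq_bounceFlow (hf : DifferentiableOn ℝ f₀ S)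
    (hbc : SpecularBoundary f₀) (hcomp : InitialBoundaryCompatible f₀)
    (hq : q ∈ transversalSet) (ht : q.1 = exitTime q.2.1 q.2.2) :
    chainDeriv f₀ freeFlow q = chainDeriv f₀ bounceFlow q := by
  have hin : ⟪q.2.2, exitPoint q.2.1 q.2.2⟫ < 0 := by
    rw [inner_exitPoint hq.1, neg_lt_zero]
    exact Real.sqrt_pos.2 hq.2
  have hfree : freeFlow q = (exitPoint q.2.1 q.2.2, q.2.2) := by rw [freeFlow, ht, exitPoint]
  refine ContinuousLinearMap.ext fun δ => ?_
  rw [chainDeriv, chainDeriv, ContinuousLinearMap.comp_apply, ContinuousLinearMap.comp_apply,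
    fderiv_bounceFlow_apply_of_eq_exitTime hq ht, bounceFlow_of_eq_exitTime ht, hfree]
  exact fderivWithin_eq_bounceJacobian hf hbc hcomp (norm_exitPoint hq.1 hq.2.le) hin _

lemma differentiableAt_bounceFlow (hq : q ∈ transversalSet) : DifferentiableAt ℝ bounceFlow q :=
  ((contDiffOn_bounceFlow (n := 1)).contDiffAt (isOpen_transversalSet.mem_nhds hq)).differentiableAt
    one_ne_zero

lemma hasFDerivWithinAt_Ffun_free (hf : DifferentiableOn ℝ f₀ S) (hq : q ∈ preBounceSet) :
    HasFDerivWithinAt (Ffun f₀) (chainDeriv f₀ freeFlow q) preBounceSet q :=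
  .congr' ((hf _ (mapsTo_freeFlow hq)).hasFDerivWithinAt.comp q
    ((contDiff_freeFlow (n := 1)).differentiable one_ne_zero q).hasFDerivAt.hasFDerivWithinAt
    mapsTo_freeFlow) eqOn_Ffun_freeFlow hq

lemma hasFDerivWithinAt_Ffun_bounce (hf : DifferentiableOn ℝ f₀ S) (hbc : SpecularBoundary f₀)
    (hq : q ∈ postBounceSet) :
    HasFDerivWithinAt (Ffun f₀) (chainDeriv f₀ bounceFlow q) postBounceSet q :=
  have hg := (differentiableAt_bounceFlow (postBounceSet_subset_transversalSet hq)).hasFDerivAt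
  .congr' ((hf _ (mapsTo_bounceFlow hq)).hasFDerivWithinAt.comp q hg.hasFDerivWithinAt
    mapsTo_bounceFlow) (eqOn_Ffun_bounceFlow hbc) hq

lemma continuousOn_chainDeriv_free (hf : ContDiffOn ℝ 1 f₀ S) :
    ContinuousOn (chainDeriv f₀ freeFlow) preBounceSet :=
  ((hf.continuousOn_fderivWithin uniqueDiffOn_S le_rfl).comp
    (contDiff_freeFlow (n := 0)).continuous.continuousOn mapsTo_freeFlow).clm_comp
    ((contDiff_freeFlow (n := 1)).continuous_fderiv one_ne_zero).continuousOn

lemma continuousOn_chainDeriv_bounce (hf : ContDiffOn ℝ 1 f₀ S) :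
    ContinuousOn (chainDeriv f₀ bounceFlow) postBounceSet :=
  ((hf.continuousOn_fderivWithin uniqueDiffOn_S le_rfl).comp
    ((contDiffOn_bounceFlow (n := 0)).continuousOn.mono postBounceSet_subset_transversalSet)
    mapsTo_bounceFlow).clm_comp
    (((contDiffOn_bounceFlow (n := 1)).continuousOn_fderiv_of_isOpen isOpen_transversalSet
      le_rfl).mono postBounceSet_subset_transversalSet)

lemma FfunDeriv_eq_free (hq : q ∈ preBounceSet) : FfunDeriv f₀ q = chainDeriv f₀ freeFlow q :=
  if_pos hq.2

lemma FfunDeriv_eq_bounce (hf : DifferentiableOn ℝ f₀ S) (hbc : SpecularBoundary f₀)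
    (hcomp : InitialBoundaryCompatible f₀) (hq : q ∈ postBounceSet) :
    FfunDeriv f₀ q = chainDeriv f₀ bounceFlow q := by
  rcases (show exitTime q.2.1 q.2.2 ≤ q.1 from hq.2).lt_or_eq with h | h
  · exact if_neg h.not_ge
  · rw [FfunDeriv, if_pos h.ge, chainDeriv_freeFlow_eq_bounceFlow hf hbc hcomp
      (postBounceSet_subset_transversalSet hq) h.symm]

lemma hasFDerivWithinAt_Ffun (hf : DifferentiableOn ℝ f₀ S) (hbc : SpecularBoundary f₀)
    (hcomp : InitialBoundaryCompatible f₀) (hq : q ∈ U) :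
    HasFDerivWithinAt (Ffun f₀) (FfunDeriv f₀ q) U q := by
  rw [← preBounceSet_union_postBounceSet] at hq ⊢
  refine .union_of_closure_inter_subset closure_preBounceSet_inter_subset
    closure_postBounceSet_inter_subset hq (fun h => ?_) (fun h => ?_)
  · rw [FfunDeriv_eq_free h]
    exact hasFDerivWithinAt_Ffun_free hf h
  · rw [FfunDeriv_eq_bounce hf hbc hcomp h]
    exact hasFDerivWithinAt_Ffun_bounce hf hbc h

lemma continuousOn_FfunDeriv (hf : ContDiffOn ℝ 1 f₀ S) (hbc : SpecularBoundary f₀)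
    (hcomp : InitialBoundaryCompatible f₀) : ContinuousOn (FfunDeriv f₀) U := by
  rw [← preBounceSet_union_postBounceSet]
  refine .union_of_closure_inter_subset closure_preBounceSet_inter_subset
    closure_postBounceSet_inter_subset ?_ ?_
  · exact (continuousOn_chainDeriv_free hf).congr fun _ => FfunDeriv_eq_free
  · exact (continuousOn_chainDeriv_bounce hf).congr fun _ =>
      FfunDeriv_eq_bounce (hf.differentiableOn one_ne_zero) hbc hcomp

lemma FfunDeriv_apply_flowDir (hq : q ∈ U) : FfunDeriv f₀ q (1, q.2.2, 0) = 0 := by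
  have hq' := U_subset_transversalSet hq
  unfold FfunDeriv
  split_ifs
  · rw [chainDeriv, ContinuousLinearMap.comp_apply,
      ((contDiff_freeFlow (n := 1)).differentiable one_ne_zero q).hasFDerivAt
        |>.apply_eq_zero_of_forall_add_smul_eq _ (freeFlow_add_smul q), map_zero]
  · rw [chainDeriv, ContinuousLinearMap.comp_apply,
      (differentiableAt_bounceFlow hq').hasFDerivAt
        |>.apply_eq_zero_of_forall_add_smul_eq _ (bounceFlow_add_smul hq'.1), map_zero]

end MildSolution

/-- C¹ regularity through one bounce and the free transport equation. -/
theorem stmt18 (f₀ : E × E → ℝ)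
    (hf : ContDiffOn ℝ 1 f₀ S)
    (hbc : ∀ x v : E, ‖x‖ = 1 → f₀ (x, v) = f₀ (x, mulV (Rmat x) v))
    (hcomp : ∀ x v : E, ‖x‖ = 1 → dot v x < 0 →
      gradx f₀ x v =
        vMulM (gradx f₀ x (mulV (Rmat x) v)) (Rmat x) -
          (2 : ℝ) • vMulM (gradv f₀ x (mulV (Rmat x) v)) (Amat v x)) :
    ContDiffOn ℝ 1 (Ffun f₀) U ∧
    ∀ p ∈ U,
      fderivWithin ℝ (Ffun f₀) U p ((1 : ℝ), 0, 0) +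
          p.2.2 0 * fderivWithin ℝ (Ffun f₀) U p (0, EuclideanSpace.single 0 1, 0) +
          p.2.2 1 * fderivWithin ℝ (Ffun f₀) U p (0, EuclideanSpace.single 1 1, 0) = 0 := by
  have hderiv := fun p (hp : p ∈ U) =>
    hasFDerivWithinAt_Ffun (hf.differentiableOn one_ne_zero) hbc hcomp hp
  refine ⟨contDiffOn_one_of_hasFDerivWithinAt hderiv (continuousOn_FfunDeriv hf hbc hcomp),
    fun p hp => ?_⟩
  have hflow : ((1 : ℝ), p.2.2, (0 : E)) = ((1 : ℝ), 0, 0) +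
      p.2.2 0 • (0, EuclideanSpace.single 0 1, 0) +
      p.2.2 1 • (0, EuclideanSpace.single 1 1, 0) := by
    ext i <;> try fin_cases i
    all_goals simp
  have h := FfunDeriv_apply_flowDir (f₀ := f₀) hp
  rw [← (hderiv p hp).fderivWithin (uniqueDiffOn_U p hp), hflow, map_add, map_add, map_smul,
    map_smul] at h
  simpa using h
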